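/- Let N be a symmetric (1+k)×(1+k) real matrix and Γ := { γ ∈ ℝ^k : [1;γ]ᵀN[1;γ] ≥ 0 }. If N ≤ 0 (negative semidefinite), N₂₂ is negative definite, and -N₂₂⁻¹N₂₁ ≥ 0 elementwise, then Γ ⊆ ℝ^k_{≥0}, i.e., every γ ∈ Γ has all coordinates nonnegative. -/

import Mathlib

/-! Completing the square with `c = -N₂₂⁻¹N₂₁` gives
`q(γ) = q(c) + (γ - c)ᵀN₂₂(γ - c)` for `q(γ) = [1;γ]ᵀN[1;γ]`. Negative semidefiniteness of `N`
gives `q(c) ≤ 0`, so `q(γ) ≥ 0` forces `(γ - c)ᵀN₂₂(γ - c) ≥ 0`, hence `γ = c` by negative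
definiteness of `N₂₂`; and `c ≥ 0` by hypothesis. -/

open Matrix

namespace Matrix

variable {n K : Type*} [Fintype n]

lemma IsSymm.dotProduct_mulVec_comm {R : Type*} [CommSemiring R] {A : Matrix n n R}
    (hA : A.IsSymm) (x y : n → R) : x ⬝ᵥ A *ᵥ y = y ⬝ᵥ A *ᵥ x := by
  rw [dotProduct_mulVec, ← mulVec_transpose, hA.eq, dotProduct_comm]

lemma IsSymm.two_mul_dotProduct_add_dotProduct_mulVec {R : Type*} [CommRing R]
    {A : Matrix n n R} (hA : A.IsSymm) {b c : n → R} (hc : A *ᵥ c = -b) (x : n → R) :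
    2 * (b ⬝ᵥ x) + x ⬝ᵥ A *ᵥ x = (x - c) ⬝ᵥ A *ᵥ (x - c) + b ⬝ᵥ c := by
  have hxc : x ⬝ᵥ A *ᵥ c = -(b ⬝ᵥ x) := by rw [hc, dotProduct_neg, dotProduct_comm]
  have hcc : c ⬝ᵥ A *ᵥ c = -(b ⬝ᵥ c) := by rw [hc, dotProduct_neg, dotProduct_comm]
  rw [mulVec_sub, dotProduct_sub, sub_dotProduct, sub_dotProduct,
    hA.dotProduct_mulVec_comm c x, hxc, hcc]
  ring

variable [Field K] [LinearOrder K] [IsStrictOrderedRing K] [StarRing K] [TrivialStar K]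

lemma PosDef.eq_zero_of_dotProduct_mulVec_nonpos {A : Matrix n n K} (hA : A.PosDef)
    {x : n → K} (hx : x ⬝ᵥ A *ᵥ x ≤ 0) : x = 0 := by
  by_contra hx0
  have hpos := hA.dotProduct_mulVec_pos hx0
  rw [star_trivial] at hpos
  linarith

theorem PosDef.eq_neg_inv_mulVec_of_nonneg_quadratic [DecidableEq n] {a : K} {b : n → K}
    {A : Matrix n n K} (hA : (-A).PosDef)
    (hnonpos : ∀ y, a + 2 * (b ⬝ᵥ y) + y ⬝ᵥ A *ᵥ y ≤ 0)
    {x : n → K} (hx : 0 ≤ a + 2 * (b ⬝ᵥ x) + x ⬝ᵥ A *ᵥ x) : x = -(A⁻¹ *ᵥ b) := by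
  set c := -(A⁻¹ *ᵥ b)
  have hsymm : A.IsSymm := isSymm_neg_iff.mp (isHermitian_iff_isSymm.mp hA.isHermitian)
  have hunit : IsUnit A := by simpa using hA.isUnit.neg
  have hc : A *ᵥ c = -b := by
    rw [mulVec_neg, mulVec_mulVec, mul_nonsing_inv _ ((isUnit_iff_isUnit_det A).mp hunit),
      one_mulVec]
  have hsq := hsymm.two_mul_dotProduct_add_dotProduct_mulVec hc
  have hmax : a + b ⬝ᵥ c ≤ 0 := by
    have := hnonpos c
    rw [add_assoc, hsq, sub_self, zero_dotProduct] at this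
    linarith
  have hdev : (x - c) ⬝ᵥ (-A) *ᵥ (x - c) ≤ 0 := by
    rw [neg_mulVec, dotProduct_neg]
    rw [add_assoc, hsq] at hx
    linarith
  exact sub_eq_zero.mp (hA.eq_zero_of_dotProduct_mulVec_nonpos hdev)

end Matrix

/-- If the full matrix N = [[N11, N21ᵀ],[N21, N22]] is negative
semidefinite, N22 is negative definite and -N22⁻¹N21 ≥ 0 elementwise, then
every γ with [1;γ]ᵀN[1;γ] ≥ 0 has all coordinates nonnegative. -/
theorem stmt7 {k : ℕ}
    (N11 : ℝ) (N21 : Fin k → ℝ) (N22 : Matrix (Fin k) (Fin k) ℝ)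
    (hNsd : ∀ (t : ℝ) (γ : Fin k → ℝ),
      t ^ 2 * N11 + 2 * t * (N21 ⬝ᵥ γ) + γ ⬝ᵥ N22.mulVec γ ≤ 0)
    (hN22 : (-N22).PosDef)
    (hcenter : ∀ i, 0 ≤ (-(N22⁻¹.mulVec N21)) i) :
    ∀ γ : Fin k → ℝ,
      0 ≤ N11 + 2 * (N21 ⬝ᵥ γ) + γ ⬝ᵥ N22.mulVec γ → ∀ i, 0 ≤ γ i := by
  intro γ hγ
  have hnonpos : ∀ y, N11 + 2 * (N21 ⬝ᵥ y) + y ⬝ᵥ N22 *ᵥ y ≤ 0 := by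
    simpa using hNsd 1
  rw [hN22.eq_neg_inv_mulVec_of_nonneg_quadratic hnonpos hγ]
  exact hcenter
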